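/- The greedy initial-solution algorithm for the Maximal Covering problem returns a feasible solution: starting from empty built sets and cost 0, processing O/D pairs in any order and adding the nodes and edges of Path_w (and setting z^w = 1) only when the incremental cost keeps the total at most C_max, the final (x,y,z) satisfies the budget constraint, x_e ≤ y_i for endpoints, and for each w with z^w = 1 the built subgraph contains a path from w^s to w^t of length at most u^w. -/

import Mathlib

/-!
Every greedy step preserves an invariant of the state: the running cost is exactly the cost of
the built nodes and edges and stays within the budget, every built edge has both endpoints built,
and every selected pair has all edges of its path built. The endpoint clause survives a step
because each edge of a walk has its endpoints among the walk's nodes; the cost clauses because a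
step adds exactly the incremental cost, and only when the budget allows it. Feasibility of the
final solution is a restatement of the invariant.
-/

namespace Stmt10

variable {V E W : Type*}

def arcSrc (ends : E → V × V) : E × Bool → V
  | (e, true) => (ends e).1
  | (e, false) => (ends e).2

def arcDst (ends : E → V × V) : E × Bool → V
  | (e, true) => (ends e).2
  | (e, false) => (ends e).1

def IsWalk (ends : E → V × V) : V → V → List (E × Bool) → Prop
  | s, t, [] => s = t
  | s, t, a :: L => arcSrc ends a = s ∧ IsWalk ends (arcDst ends a) t L

def IsPath (ends : E → V × V) (s t : V) (L : List (E × Bool)) : Prop :=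
  IsWalk ends s t L ∧ (s :: L.map (arcDst ends)).Nodup

def walkLen (d : E → ℝ) (L : List (E × Bool)) : ℝ :=
  (L.map fun a => d a.1).sum

/-- Node set of the fixed path of pair `w`. -/
def pNodes [DecidableEq V] (ends : E → V × V) (orig : W → V)
    (P : W → List (E × Bool)) (w : W) : Finset V :=
  insert (orig w) ((P w).map (arcDst ends)).toFinset

/-- Edge set of the fixed path of pair `w`. -/
def pEdges [DecidableEq E] (P : W → List (E × Bool)) (w : W) : Finset E :=
  ((P w).map Prod.fst).toFinset

/-- One greedy step: add the path of `w` if the incremental cost fits the budget. -/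
noncomputable def step [DecidableEq V] [DecidableEq E] [DecidableEq W]
    (ends : E → V × V) (b : V → ℝ) (c : E → ℝ) (Cmax : ℝ) (orig : W → V)
    (P : W → List (E × Bool))
    (st : Finset V × Finset E × Finset W × ℝ) (w : W) :
    Finset V × Finset E × Finset W × ℝ :=
  let inc := (∑ i ∈ pNodes ends orig P w \ st.1, b i)
      + (∑ e ∈ pEdges P w \ st.2.1, c e)
  if st.2.2.2 + inc ≤ Cmax then
    (st.1 ∪ pNodes ends orig P w, st.2.1 ∪ pEdges P w,
      insert w st.2.2.1, st.2.2.2 + inc)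
  else st

theorem IsWalk.arcSrc_mem {ends : E → V × V} {s t : V} {L : List (E × Bool)}
    (h : IsWalk ends s t L) {a : E × Bool} (ha : a ∈ L) :
    arcSrc ends a ∈ s :: L.map (arcDst ends) := by
  induction L generalizing s with
  | nil => cases ha
  | cons hd tl ih =>
    obtain ⟨hsrc, htl⟩ := h
    rcases List.mem_cons.1 ha with rfl | ha
    · exact hsrc ▸ List.mem_cons_self
    · exact List.mem_cons_of_mem _ (ih htl ha)

theorem IsWalk.ends_mem {ends : E → V × V} {s t : V} {L : List (E × Bool)}
    (h : IsWalk ends s t L) {a : E × Bool} (ha : a ∈ L) :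
    (ends a.1).1 ∈ s :: L.map (arcDst ends) ∧ (ends a.1).2 ∈ s :: L.map (arcDst ends) := by
  have hsrc := h.arcSrc_mem ha
  have hdst : arcDst ends a ∈ s :: L.map (arcDst ends) :=
    List.mem_cons_of_mem _ (List.mem_map_of_mem ha)
  obtain ⟨e, _ | _⟩ := a
  · exact ⟨hdst, hsrc⟩
  · exact ⟨hsrc, hdst⟩

theorem mem_pEdges_of_mem [DecidableEq E] {P : W → List (E × Bool)} {w : W} {a : E × Bool}
    (ha : a ∈ P w) : a.1 ∈ pEdges P w :=
  List.mem_toFinset.2 (List.mem_map_of_mem ha)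

theorem ends_mem_pNodes [DecidableEq V] [DecidableEq E] {ends : E → V × V} {orig dest : W → V}
    {P : W → List (E × Bool)} {w : W} (hw : IsWalk ends (orig w) (dest w) (P w)) {e : E}
    (he : e ∈ pEdges P w) :
    (ends e).1 ∈ pNodes ends orig P w ∧ (ends e).2 ∈ pNodes ends orig P w := by
  obtain ⟨a, ha, rfl⟩ := List.mem_map.1 (List.mem_toFinset.1 he)
  rw [pNodes, ← List.toFinset_cons, List.mem_toFinset, List.mem_toFinset]
  exact hw.ends_mem ha

theorem _root_.Finset.sum_union_eq_add_sum_sdiff {ι M : Type*} [DecidableEq ι] [AddCommMonoid M]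
    (s t : Finset ι) (f : ι → M) :
    ∑ i ∈ s ∪ t, f i = ∑ i ∈ s, f i + ∑ i ∈ t \ s, f i := by
  rw [← Finset.union_sdiff_self_eq_union, Finset.sum_union Finset.disjoint_sdiff]

/-- A greedy state is `(built nodes, built edges, selected pairs, running cost)`. -/
structure GreedyInv [DecidableEq E] (ends : E → V × V) (b : V → ℝ) (c : E → ℝ) (Cmax : ℝ)
    (P : W → List (E × Bool)) (st : Finset V × Finset E × Finset W × ℝ) : Prop where
  cost_eq : st.2.2.2 = ∑ i ∈ st.1, b i + ∑ e ∈ st.2.1, c e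
  cost_le : st.2.2.2 ≤ Cmax
  ends_mem : ∀ e ∈ st.2.1, (ends e).1 ∈ st.1 ∧ (ends e).2 ∈ st.1
  pEdges_subset : ∀ w ∈ st.2.2.1, pEdges P w ⊆ st.2.1

namespace GreedyInv

variable {ends : E → V × V} {b : V → ℝ} {c : E → ℝ} {Cmax : ℝ} {orig dest : W → V}
  {P : W → List (E × Bool)}

theorem empty [DecidableEq E] (hC : 0 ≤ Cmax) : GreedyInv ends b c Cmax P (∅, ∅, ∅, 0) :=
  ⟨by simp, hC, by simp, by simp⟩

variable [DecidableEq V] [DecidableEq E] [DecidableEq W]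

theorem step (hP : ∀ w, IsWalk ends (orig w) (dest w) (P w))
    {st : Finset V × Finset E × Finset W × ℝ} (h : GreedyInv ends b c Cmax P st) (w : W) :
    GreedyInv ends b c Cmax P (step ends b c Cmax orig P st w) := by
  dsimp only [Stmt10.step]
  split_ifs with hfit
  · refine ⟨?_, hfit, ?_, ?_⟩
    · simp only [Finset.sum_union_eq_add_sum_sdiff, h.cost_eq]
      ring
    · intro e he
      rcases Finset.mem_union.1 he with he | he
      · exact (h.ends_mem e he).imp (Finset.mem_union_left _) (Finset.mem_union_left _)
      · exact (ends_mem_pNodes (hP w) he).imp (Finset.mem_union_right _)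
          (Finset.mem_union_right _)
    · intro w' hw'
      rcases Finset.mem_insert.1 hw' with rfl | hw'
      · exact Finset.subset_union_right
      · exact (h.pEdges_subset w' hw').trans Finset.subset_union_left
  · exact h

theorem foldl (hP : ∀ w, IsWalk ends (orig w) (dest w) (P w)) (hC : 0 ≤ Cmax) (ord : List W) :
    GreedyInv ends b c Cmax P (ord.foldl (Stmt10.step ends b c Cmax orig P) (∅, ∅, ∅, 0)) :=
  List.foldlRecOn ord _ (empty hC) fun _ h w _ => h.step hP w

end GreedyInv

theorem _root_.Finset.sum_mul_ite_mem {ι R : Type*} [Fintype ι] [DecidableEq ι]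
    [NonAssocSemiring R] (s : Finset ι) (f : ι → R) :
    ∑ i, f i * (if i ∈ s then 1 else 0) = ∑ i ∈ s, f i := by
  simp only [mul_ite, mul_one, mul_zero, Finset.sum_ite_mem, Finset.univ_inter]

theorem ite_mem_le_ite_mem {α β R : Type*} [DecidableEq α] [DecidableEq β] [Zero R] [One R]
    [Preorder R] [ZeroLEOneClass R] {s : Finset α} {t : Finset β} {a : α} {b : β}
    (h : a ∈ s → b ∈ t) : (if a ∈ s then 1 else 0 : R) ≤ if b ∈ t then 1 else 0 := by
  by_cases ha : a ∈ s
  · rw [if_pos ha, if_pos (h ha)]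
  · rw [if_neg ha]
    split_ifs
    exacts [zero_le_one, le_rfl]

theorem greedy_MC_feasible_general [Fintype V] [Fintype E]
    [DecidableEq V] [DecidableEq E] [DecidableEq W]
    (ends : E → V × V) (b : V → ℝ) (c : E → ℝ) (d : E → ℝ) (Cmax : ℝ)
    (orig dest : W → V) (u : W → ℝ) (P : W → List (E × Bool))
    (hC : 0 ≤ Cmax)
    (hP : ∀ w, IsPath ends (orig w) (dest w) (P w) ∧ walkLen d (P w) ≤ u w)
    (ord : List W) :
    let fin := ord.foldl (step ends b c Cmax orig P) (∅, ∅, ∅, 0)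
    let x : E → ℝ := fun e => if e ∈ fin.2.1 then 1 else 0
    let y : V → ℝ := fun i => if i ∈ fin.1 then 1 else 0
    let z : W → ℝ := fun w => if w ∈ fin.2.2.1 then 1 else 0
    ((∑ e : E, c e * x e) + (∑ i : V, b i * y i) ≤ Cmax) ∧
    (∀ e : E, x e ≤ y (ends e).1 ∧ x e ≤ y (ends e).2) ∧
    (∀ w : W, z w = 1 →
      ∃ L : List (E × Bool), IsPath ends (orig w) (dest w) L ∧
        (∀ a ∈ L, x a.1 = 1) ∧ walkLen d L ≤ u w) := by
  intro fin x y z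
  have hinv : GreedyInv ends b c Cmax P fin :=
    GreedyInv.foldl (fun w => (hP w).1.1) hC ord
  refine ⟨?_, fun e => ?_, fun w hw => ?_⟩
  · simp only [x, y, Finset.sum_mul_ite_mem]
    rw [add_comm, ← hinv.cost_eq]
    exact hinv.cost_le
  · exact ⟨ite_mem_le_ite_mem fun he => (hinv.ends_mem e he).1,
      ite_mem_le_ite_mem fun he => (hinv.ends_mem e he).2⟩
  · have hsel : w ∈ fin.2.2.1 := by
      by_contra hw'
      simp [z, hw'] at hw
    exact ⟨P w, (hP w).1,
      fun a ha => if_pos (hinv.pEdges_subset w hsel (mem_pEdges_of_mem ha)), (hP w).2⟩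

/-- processing the O/D pairs in any order, the greedy
initial-solution algorithm for (MC) returns a feasible solution. -/
theorem greedy_MC_feasible [Fintype V] [Fintype E]
    [DecidableEq V] [DecidableEq E] [DecidableEq W]
    (ends : E → V × V) (b : V → ℝ) (c : E → ℝ) (d : E → ℝ) (Cmax : ℝ)
    (orig dest : W → V) (u : W → ℝ) (P : W → List (E × Bool))
    (hb : ∀ i, 0 ≤ b i) (hc : ∀ e, 0 ≤ c e) (hC : 0 ≤ Cmax)
    (hP : ∀ w, IsPath ends (orig w) (dest w) (P w) ∧ walkLen d (P w) ≤ u w)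
    (ord : List W) :
    let fin := ord.foldl (step ends b c Cmax orig P) (∅, ∅, ∅, 0)
    let x : E → ℝ := fun e => if e ∈ fin.2.1 then 1 else 0
    let y : V → ℝ := fun i => if i ∈ fin.1 then 1 else 0
    let z : W → ℝ := fun w => if w ∈ fin.2.2.1 then 1 else 0
    ((∑ e : E, c e * x e) + (∑ i : V, b i * y i) ≤ Cmax) ∧
    (∀ e : E, x e ≤ y (ends e).1 ∧ x e ≤ y (ends e).2) ∧
    (∀ w : W, z w = 1 →
      ∃ L : List (E × Bool), IsPath ends (orig w) (dest w) L ∧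
        (∀ a ∈ L, x a.1 = 1) ∧ walkLen d L ≤ u w) :=
  greedy_MC_feasible_general ends b c d Cmax orig dest u P hC hP ord

end Stmt10
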